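/- Let J be an ideal of S = K[x_1,...,x_n] with a fixed monomial order, G_J a Gröbner basis of J, and E an ideal such that for all f ∈ G_J and g ∈ E the S-polynomial S(f,g) lies in E (E is S-nice with respect to G_J). Then (J,E) is a Gröbner-nice pair, i.e., in(J+E) = in(J) + in(E). -/

import Mathlib

open MvPolynomial

variable {K : Type*} [Field K] {n : ℕ}

/-- The leading monomial (exponent vector) of a polynomial with respect to a monomial
order `m`: the maximum of the support; by convention `lm m 0 = 0`. -/
noncomputable def lm (m : MonomialOrder (Fin n)) (f : MvPolynomial (Fin n) K) :
    Fin n →₀ ℕ :=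
  m.toSyn.symm (f.support.sup fun d => m.toSyn d)

/-- The initial ideal of `I`: the ideal generated by the leading monomials of the
nonzero elements of `I`. -/
noncomputable def initialIdeal (m : MonomialOrder (Fin n))
    (I : Ideal (MvPolynomial (Fin n) K)) : Ideal (MvPolynomial (Fin n) K) :=
  Ideal.span {p | ∃ f ∈ I, f ≠ 0 ∧ p = monomial (lm m f) (1 : K)}

/-- `G` is a Gröbner basis of `I`: a finite set of nonzero polynomials generating `I`
whose leading monomials generate the initial ideal of `I`. -/
def IsGroebnerBasis (m : MonomialOrder (Fin n)) (I : Ideal (MvPolynomial (Fin n) K))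
    (G : Set (MvPolynomial (Fin n) K)) : Prop :=
  G.Finite ∧ (0 : MvPolynomial (Fin n) K) ∉ G ∧ Ideal.span G = I ∧
    Ideal.span ((fun g => monomial (lm m g) (1 : K)) '' G) = initialIdeal m I

/-- The S-polynomial `S(f,g)` with respect to the monomial order `m`. -/
noncomputable def sPoly (m : MonomialOrder (Fin n)) (f g : MvPolynomial (Fin n) K) :
    MvPolynomial (Fin n) K :=
  monomial (lm m f ⊔ lm m g - lm m f) (f.coeff (lm m f))⁻¹ * f -
    monomial (lm m f ⊔ lm m g - lm m g) (g.coeff (lm m g))⁻¹ * g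

/-- An ideal is a monomial ideal if it is generated by monomials. -/
def IsMonomialIdeal (I : Ideal (MvPolynomial (Fin n) K)) : Prop :=
  ∃ M : Set (Fin n →₀ ℕ), I = Ideal.span ((fun μ => (monomial μ (1 : K))) '' M)

/-! Top-reducing `e ∈ E` modulo `G_J` only subtracts terms `x^α f` with `f ∈ G_J` and
`in f ∣ in e`, and S-niceness puts each of them in `E`: such a term is `S(f, e)` plus a multiple
of `e`. Hence `e = q + r` with `q ∈ J`, `r ∈ E` and `in r` divisible by no `in f`, i.e.
`in r ∉ in(J)`. Writing `h = p + e ∈ J + E` as `(p + q) + r`, the leading monomials of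
`p + q ∈ J` and of `r` cannot cancel, so `in h` is one of them. -/

open MonomialOrder

theorem MonomialOrder.degree_reduce_lt_of_ne_zero {σ R : Type*} [CommRing R]
    {m : MonomialOrder σ} {f b : MvPolynomial σ R} (hb : IsUnit (m.leadingCoeff b))
    (hbf : m.degree b ≤ m.degree f) (hred : m.reduce hb f ≠ 0) :
    m.degree (m.reduce hb f) ≺[m] m.degree f := by
  refine degree_reduce_lt hb hbf fun hf0 => hred ?_
  have hb0 : m.degree b = 0 := le_antisymm (hf0 ▸ hbf) bot_le
  rw [reduce, hf0, hb0, tsub_zero, ← C_apply, sub_eq_zero]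
  calc f = C (m.leadingCoeff f) := eq_C_of_degree_eq_zero hf0
    _ = C (↑hb.unit⁻¹ * m.leadingCoeff f) * C (m.leadingCoeff b) := by
      rw [← C_mul, mul_right_comm, hb.val_inv_mul, one_mul]
    _ = C (↑hb.unit⁻¹ * m.leadingCoeff f) * b := by rw [← eq_C_of_degree_eq_zero hb0]

section InitialIdeal

variable (m : MonomialOrder (Fin n))

theorem lm_eq_degree (f : MvPolynomial (Fin n) K) : lm m f = m.degree f := rfl

variable {m} {I I' : Ideal (MvPolynomial (Fin n) K)} {f : MvPolynomial (Fin n) K}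

theorem monomial_degree_mem_initialIdeal (hf : f ∈ I) (hf0 : f ≠ 0) :
    monomial (m.degree f) (1 : K) ∈ initialIdeal m I :=
  Ideal.subset_span ⟨f, hf, hf0, rfl⟩

theorem initialIdeal_mono (h : I ≤ I') : initialIdeal m I ≤ initialIdeal m I' :=
  Ideal.span_mono fun _ ⟨f, hf, hf0, hp⟩ => ⟨f, h hf, hf0, hp⟩

theorem IsGroebnerBasis.exists_degree_le {G : Set (MvPolynomial (Fin n) K)}
    (hG : IsGroebnerBasis m I G) (hf : f ∈ I) (hf0 : f ≠ 0) :
    ∃ g ∈ G, m.degree g ≤ m.degree f := by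
  have h := monomial_degree_mem_initialIdeal (m := m) hf hf0
  rw [← hG.2.2.2, ← Set.image_image (fun s => monomial s (1 : K)) (lm m),
    mem_ideal_span_monomial_image] at h
  obtain ⟨_, ⟨g, hg, rfl⟩, hle⟩ := h (m.degree f) (by simp)
  exact ⟨g, hg, hle⟩

theorem monomial_degree_add_mem_sup {j r : MvPolynomial (Fin n) K} (hj : j ∈ I) (hr : r ∈ I')
    (hjr : j + r ≠ 0) (hdeg : j ≠ 0 → r ≠ 0 → m.degree j ≠ m.degree r) :
    monomial (m.degree (j + r)) (1 : K) ∈ initialIdeal m I ⊔ initialIdeal m I' := by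
  rcases eq_or_ne j 0 with rfl | hj0
  · rw [zero_add] at hjr ⊢
    exact Submodule.mem_sup_right (monomial_degree_mem_initialIdeal hr hjr)
  rcases eq_or_ne r 0 with rfl | hr0
  · rw [add_zero] at hjr ⊢
    exact Submodule.mem_sup_left (monomial_degree_mem_initialIdeal hj hjr)
  have h := degree_add_of_ne (hdeg hj0 hr0)
  rcases max_choice (m.toSyn (m.degree j)) (m.toSyn (m.degree r)) with hmax | hmax
  · rw [m.toSyn.injective (h.trans hmax)]
    exact Submodule.mem_sup_left (monomial_degree_mem_initialIdeal hj hj0)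
  · rw [m.toSyn.injective (h.trans hmax)]
    exact Submodule.mem_sup_right (monomial_degree_mem_initialIdeal hr hr0)

end InitialIdeal

section SNice

variable {m : MonomialOrder (Fin n)} {J E : Ideal (MvPolynomial (Fin n) K)}
  {G : Set (MvPolynomial (Fin n) K)}

theorem monomial_mul_mem_of_sPoly_mem {f e : MvPolynomial (Fin n) K} (he : e ∈ E)
    (hfe : sPoly m f e ∈ E) (hf0 : f ≠ 0) (hle : m.degree f ≤ m.degree e) (c : K) :
    monomial (m.degree e - m.degree f) c * f ∈ E := by
  have h : monomial (m.degree e - m.degree f) (m.leadingCoeff f)⁻¹ * f ∈ E := by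
    have := E.add_mem hfe (E.mul_mem_left
      (monomial (lm m f ⊔ lm m e - lm m e) (e.coeff (lm m e))⁻¹) he)
    rwa [sPoly, sub_add_cancel, lm_eq_degree, lm_eq_degree, sup_eq_right.mpr hle] at this
  have hc : c = c * m.leadingCoeff f * (m.leadingCoeff f)⁻¹ := by
    rw [mul_assoc, mul_inv_cancel₀ (m.leadingCoeff_ne_zero_iff.mpr hf0), mul_one]
  rw [hc, ← C_mul_monomial, mul_assoc]
  exact E.mul_mem_left _ h

theorem exists_eq_add_of_sPoly_mem (hGJ : G ⊆ J) (hG0 : 0 ∉ G)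
    (hS : ∀ f ∈ G, ∀ g ∈ E, g ≠ 0 → sPoly m f g ∈ E) {e : MvPolynomial (Fin n) K}
    (he : e ∈ E) :
    ∃ q ∈ J, ∃ r ∈ E, e = q + r ∧ (r = 0 ∨ ∀ g ∈ G, ¬ m.degree g ≤ m.degree r) := by
  induction hν : m.toSyn (m.degree e) using WellFoundedLT.induction generalizing e with
  | _ ν ih =>
  by_cases hred : e = 0 ∨ ∀ g ∈ G, ¬ m.degree g ≤ m.degree e
  · exact ⟨0, J.zero_mem, e, he, (zero_add e).symm, hred⟩
  push Not at hred
  obtain ⟨he0, g, hg, hle⟩ := hred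
  have hg0 : g ≠ 0 := fun h => hG0 (h ▸ hg)
  have hunit : IsUnit (m.leadingCoeff g) := (m.leadingCoeff_ne_zero_iff.mpr hg0).isUnit
  set t := monomial (m.degree e - m.degree g) (hunit.unit⁻¹ * m.leadingCoeff e) * g
  have htJ : t ∈ J := J.mul_mem_left _ (hGJ hg)
  have htE : t ∈ E := monomial_mul_mem_of_sPoly_mem he (hS g hg e he he0) hg0 hle _
  have hreduce : m.reduce hunit e = e - t := rfl
  rcases eq_or_ne (e - t) 0 with h0 | hne
  · exact ⟨e, sub_eq_zero.mp h0 ▸ htJ, 0, E.zero_mem, (add_zero e).symm, Or.inl rfl⟩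
  have hlt := degree_reduce_lt_of_ne_zero hunit hle (hreduce ▸ hne)
  obtain ⟨q, hq, r, hr, hqr, hr'⟩ := ih _ (hν ▸ hlt) (E.sub_mem he htE) (hreduce ▸ rfl)
  exact ⟨t + q, J.add_mem htJ hq, r, hr, by rw [add_assoc, ← hqr, add_sub_cancel], hr'⟩

end SNice

/-- If `E` is S-nice with respect to a Gröbner basis `G_J` of `J` (all S-polynomials
`S(f,g)` with `f ∈ G_J`, `g ∈ E` lie in `E`), then `(J,E)` is a Gröbner-nice pair. -/
theorem stmt15 (m : MonomialOrder (Fin n)) (J E : Ideal (MvPolynomial (Fin n) K))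
    (GJ : Set (MvPolynomial (Fin n) K)) (hGJ : IsGroebnerBasis m J GJ)
    (hS : ∀ f ∈ GJ, ∀ g ∈ E, g ≠ 0 → sPoly m f g ∈ E) :
    initialIdeal m (J + E) = initialIdeal m J + initialIdeal m E := by
  refine le_antisymm ?_ (sup_le (initialIdeal_mono le_sup_left) (initialIdeal_mono le_sup_right))
  refine Ideal.span_le.mpr ?_
  rintro _ ⟨h, hh, hh0, rfl⟩
  obtain ⟨p, hp, e, he, rfl⟩ := Submodule.mem_sup.mp hh
  have hGJ_le : GJ ⊆ J := hGJ.2.2.1 ▸ Ideal.subset_span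
  obtain ⟨q, hq, r, hr, rfl, hr'⟩ :=
    exists_eq_add_of_sPoly_mem hGJ_le hGJ.2.1 hS he
  rw [← add_assoc] at hh0 ⊢
  refine monomial_degree_add_mem_sup (J.add_mem hp hq) hr hh0 fun hj0 hr0 hdeg => ?_
  obtain ⟨g, hg, hle⟩ := hGJ.exists_degree_le (J.add_mem hp hq) hj0
  exact hr'.resolve_left hr0 g hg (hdeg ▸ hle)
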